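/- If q is a primitive ℓ-th root of unity with ℓ > 1 odd, then D_q(C) is a free module of rank ℓ² over its center ℂ[x^ℓ, ∂^ℓ], with basis the ordered monomials xᵐ∂ᵏ for 0 ≤ m, k ≤ ℓ−1. -/

import Mathlib

/-!
`Dq q` is the ℂ-algebra of q-difference operators on ℂ, generated by `x` and `∂`
subject to the relation `∂x = q²x∂ + (q²−1)`.  `Dα` is the Euler operator `α = 1 + x∂`.
-/

noncomputable section

/-- The defining relation of `D_q(ℂ)`: `∂ * x = q² • (x * ∂) + (q² - 1) • 1`.
Here the generator `false` is `x` and `true` is `∂`. -/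
inductive DqRel (q : ℂ) : FreeAlgebra ℂ Bool → FreeAlgebra ℂ Bool → Prop
  | rel : DqRel q (FreeAlgebra.ι ℂ true * FreeAlgebra.ι ℂ false)
      ((q ^ 2) • (FreeAlgebra.ι ℂ false * FreeAlgebra.ι ℂ true)
        + (q ^ 2 - 1) • (1 : FreeAlgebra ℂ Bool))

/-- The algebra `D_q(ℂ)` of q-difference operators on `ℂ`. -/
abbrev Dq (q : ℂ) : Type := RingQuot (DqRel q)

/-- The generator `x` of `D_q(ℂ)`. -/
def Dx (q : ℂ) : Dq q := RingQuot.mkAlgHom ℂ (DqRel q) (FreeAlgebra.ι ℂ false)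

/-- The generator `∂` of `D_q(ℂ)`. -/
def Dd (q : ℂ) : Dq q := RingQuot.mkAlgHom ℂ (DqRel q) (FreeAlgebra.ι ℂ true)

/-- The Euler operator `α = 1 + x∂`. -/
def Dα (q : ℂ) : Dq q := 1 + Dx q * Dd q

/-!
The ordered monomials `xᵃ∂ᵇ` span `D_q` over `ℂ` because the commutation rule moves every `∂` to
the right of every `x`. They are linearly independent because `D_q` acts on finitely supported
functions on `ℕ × ℕ` by the formulas of left multiplication on ordered monomials, and `xᵃ∂ᵇ` sends
the basis vector at `(0, 0)` to the one at `(a, b)`. As `x^ℓ` and `∂^ℓ` are central,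
`x^(aℓ + m) ∂^(bℓ + k) = (x^ℓ)^a (∂^ℓ)^b · xᵐ∂ᵏ`, so this `ℂ`-basis consists of the products of the
monomials in `x^ℓ, ∂^ℓ`, which span the center over `ℂ`, with the `xᵐ∂ᵏ` for `m, k < ℓ`; hence the
latter form a basis over the center.
-/

open Submodule Set

section SMulTower

variable {R S A ι κ : Type*} [Semiring R] [Semiring S] [AddCommMonoid A]
  [Module R S] [Module S A] [Module R A] [IsScalarTower R S A]

theorem LinearIndependent.of_smul_of_span_eq_top {b : ι → S} {c : κ → A}
    (hb : span R (range b) = ⊤) (hbc : LinearIndependent R fun p : ι × κ ↦ b p.1 • c p.2) :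
    LinearIndependent S c := by
  let π : (ι × κ →₀ R) →ₗ[R] κ →₀ S :=
    Finsupp.linearCombination R fun p ↦ Finsupp.single p.2 (b p.1)
  have hπ : ∀ y, Finsupp.linearCombination S c (π y)
      = Finsupp.linearCombination R (fun p : ι × κ ↦ b p.1 • c p.2) y := by
    intro y
    induction y using Finsupp.induction_linear with
    | zero => simp
    | add y y' hy hy' => simp only [map_add, hy, hy']
    | single p r => simp [π, Finsupp.smul_single, smul_assoc]
  have hπ_surj : Function.Surjective π := by
    rw [← LinearMap.range_eq_top, Finsupp.range_linearCombination, eq_top_iff']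
    intro l
    induction l using Finsupp.induction_linear with
    | zero => exact zero_mem _
    | add l l' hl hl' => exact add_mem hl hl'
    | single k s =>
      have hs : Finsupp.lsingle k s ∈ (span R (range b)).map (Finsupp.lsingle k) :=
        mem_map_of_mem (hb ▸ mem_top)
      rw [map_span, ← range_comp] at hs
      refine span_mono ?_ hs
      rintro _ ⟨i, rfl⟩
      exact ⟨(i, k), rfl⟩
  refine Function.Injective.of_comp_right (g := π) ?_ hπ_surj
  rwa [show ⇑(Finsupp.linearCombination S c) ∘ π = _ from funext hπ]

variable {b : ι → S} {c : κ → A}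

def Module.Basis.ofSMulTower (hb : span R (range b) = ⊤)
    (e : Module.Basis (ι × κ) R A) (he : ∀ p, e p = b p.1 • c p.2) : Module.Basis κ S A :=
  .mk (v := c) (.of_smul_of_span_eq_top hb (funext he ▸ e.linearIndependent)) <| by
    rw [top_le_iff, ← restrictScalars_eq_top_iff R, ← span_smul_of_span_eq_top hb, eq_top_iff,
      ← e.span_eq]
    exact span_mono (range_subset_iff.2 fun p ↦ he p ▸ smul_mem_smul ⟨p.1, rfl⟩ ⟨p.2, rfl⟩)

@[simp]
theorem Module.Basis.coe_ofSMulTower (hb : span R (range b) = ⊤)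
    (e : Module.Basis (ι × κ) R A) (he : ∀ p, e p = b p.1 • c p.2) :
    ⇑(Module.Basis.ofSMulTower hb e he) = c :=
  Module.Basis.coe_mk (v := c) _ _

end SMulTower

theorem Algebra.toSubmodule_adjoin_pair {R A : Type*} [CommSemiring R] [CommSemiring A]
    [Algebra R A] (a b : A) :
    Subalgebra.toSubmodule (Algebra.adjoin R {a, b})
      = span R (range fun p : ℕ × ℕ ↦ a ^ p.1 * b ^ p.2) := by
  rw [Algebra.adjoin_eq_span]
  congr 1
  ext c
  simp [Submonoid.mem_closure_pair, eq_comm]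

namespace Dq

variable (q : ℂ)

def monomial (p : ℕ × ℕ) : Dq q := Dx q ^ p.1 * Dd q ^ p.2

theorem Dd_mul_Dx : Dd q * Dx q = q ^ 2 • (Dx q * Dd q) + (q ^ 2 - 1) • 1 := by
  have h := RingQuot.mkAlgHom_rel ℂ (DqRel.rel (q := q))
  rwa [map_mul, map_add, map_smul, map_smul, map_mul, map_one] at h

theorem Dd_mul_Dx_pow_succ (a : ℕ) :
    Dd q * Dx q ^ (a + 1)
      = q ^ (2 * (a + 1)) • (Dx q ^ (a + 1) * Dd q) + (q ^ (2 * (a + 1)) - 1) • Dx q ^ a := by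
  induction a with
  | zero => simpa using Dd_mul_Dx q
  | succ n ih =>
    rw [pow_succ (Dx q) (n + 1), ← mul_assoc, ih, add_mul, smul_mul_assoc, smul_mul_assoc,
      mul_assoc, Dd_mul_Dx]
    simp only [mul_add, mul_smul_comm, mul_one, smul_add, smul_smul, ← mul_assoc, ← pow_succ]
    match_scalars <;> ring

theorem Dx_mul_monomial (p : ℕ × ℕ) :
    Dx q * monomial q p = monomial q (p.1 + 1, p.2) := by
  rw [monomial, monomial, ← mul_assoc, ← pow_succ']

-- At `p.1 = 0` the second coefficient vanishes, so the truncated `p.1 - 1` is harmless.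
theorem Dd_mul_monomial (p : ℕ × ℕ) :
    Dd q * monomial q p
      = q ^ (2 * p.1) • monomial q (p.1, p.2 + 1)
        + (q ^ (2 * p.1) - 1) • monomial q (p.1 - 1, p.2) := by
  obtain ⟨_ | a, b⟩ := p
  · simp [monomial, ← pow_succ']
  · rw [monomial, ← mul_assoc, Dd_mul_Dx_pow_succ, add_mul, smul_mul_assoc, smul_mul_assoc,
      mul_assoc, ← pow_succ']
    rfl

theorem mul_mem_span_monomial (u : Dq q) {v : Dq q} (hv : v ∈ span ℂ (range (monomial q))) :
    u * v ∈ span ℂ (range (monomial q)) := by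
  obtain ⟨w, rfl⟩ := RingQuot.mkAlgHom_surjective ℂ (DqRel q) u
  induction w using FreeAlgebra.induction generalizing v with
  | grade0 r => simpa [Algebra.algebraMap_eq_smul_one] using smul_mem _ r hv
  | grade1 i =>
    refine span_induction ?_ (by simp) (fun _ _ _ _ h h' ↦ by rw [mul_add]; exact add_mem h h')
      (fun r _ _ h ↦ by rw [mul_smul_comm]; exact smul_mem _ r h) hv
    rintro _ ⟨p, rfl⟩
    cases i
    · rw [← Dx, Dx_mul_monomial]
      exact subset_span ⟨_, rfl⟩
    · rw [← Dd, Dd_mul_monomial]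
      exact add_mem (smul_mem _ _ (subset_span ⟨_, rfl⟩)) (smul_mem _ _ (subset_span ⟨_, rfl⟩))
  | mul w w' hw hw' => rw [map_mul, mul_assoc]; exact hw (hw' hv)
  | add w w' hw hw' => rw [map_add, add_mul]; exact add_mem (hw hv) (hw' hv)

theorem span_monomial : span ℂ (range (monomial q)) = ⊤ :=
  eq_top_iff'.2 fun u ↦ by
    have h1 : monomial q (0, 0) = 1 := by simp [monomial]
    simpa using mul_mem_span_monomial q u (subset_span ⟨(0, 0), h1⟩)

def xAct : ((ℕ × ℕ) →₀ ℂ) →ₗ[ℂ] (ℕ × ℕ) →₀ ℂ :=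
  Finsupp.linearCombination ℂ fun p ↦ Finsupp.single (p.1 + 1, p.2) 1

def dAct : ((ℕ × ℕ) →₀ ℂ) →ₗ[ℂ] (ℕ × ℕ) →₀ ℂ :=
  Finsupp.linearCombination ℂ fun p ↦
    q ^ (2 * p.1) • Finsupp.single (p.1, p.2 + 1) 1
      + (q ^ (2 * p.1) - 1) • Finsupp.single (p.1 - 1, p.2) 1

theorem dAct_comp_xAct :
    dAct q ∘ₗ xAct = q ^ 2 • (xAct ∘ₗ dAct q) + (q ^ 2 - 1) • LinearMap.id := by
  refine Finsupp.lhom_ext' fun p ↦ LinearMap.ext_ring ?_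
  obtain ⟨_ | a, b⟩ := p <;>
    simp only [xAct, dAct, LinearMap.comp_apply, LinearMap.add_apply, LinearMap.smul_apply,
      LinearMap.id_apply, Finsupp.lsingle_apply, Finsupp.linearCombination_single, map_add,
      map_smul, one_smul, add_tsub_cancel_right] <;>
    match_scalars <;> ring

def act : Dq q →ₐ[ℂ] Module.End ℂ ((ℕ × ℕ) →₀ ℂ) :=
  RingQuot.liftAlgHom ℂ ⟨FreeAlgebra.lift ℂ fun i ↦ if i then dAct q else xAct, by
    rintro _ _ ⟨⟩
    simpa [Module.End.mul_eq_comp, Module.End.one_eq_id] using dAct_comp_xAct q⟩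

theorem act_Dx : act q (Dx q) = xAct := by
  simp [act, Dx]

theorem act_Dd : act q (Dd q) = dAct q := by
  simp [act, Dd]

theorem xAct_pow_single (a : ℕ) (p : ℕ × ℕ) :
    (xAct ^ a) (Finsupp.single p 1) = Finsupp.single (p.1 + a, p.2) 1 := by
  induction a with
  | zero => simp
  | succ n ih => rw [pow_succ', Module.End.mul_apply, ih]; simp [xAct, add_assoc]

theorem dAct_pow_single (b c : ℕ) :
    (dAct q ^ b) (Finsupp.single (0, c) 1) = Finsupp.single (0, c + b) 1 := by
  induction b with
  | zero => simp
  | succ n ih => rw [pow_succ', Module.End.mul_apply, ih]; simp [dAct, add_assoc]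

theorem act_monomial_single (p : ℕ × ℕ) :
    act q (monomial q p) (Finsupp.single (0, 0) 1) = Finsupp.single p 1 := by
  simp [monomial, act_Dx, act_Dd, dAct_pow_single, xAct_pow_single]

theorem linearIndependent_monomial : LinearIndependent ℂ (monomial q) := by
  refine .of_comp ((LinearMap.applyₗ (Finsupp.single (0, 0) 1)).comp (act q).toLinearMap) ?_
  convert (Finsupp.basisSingleOne (R := ℂ) (ι := ℕ × ℕ)).linearIndependent
  ext p : 1
  simp [act_monomial_single]

def basisMonomial : Module.Basis (ℕ × ℕ) ℂ (Dq q) :=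
  .mk (linearIndependent_monomial q) (span_monomial q).ge

theorem coe_basisMonomial : ⇑(basisMonomial q) = monomial q :=
  Module.Basis.coe_mk _ _

section Center

variable {q : ℂ} {ℓ : ℕ}

theorem Dx_pow_mem_center
    (hcenter : Subalgebra.center ℂ (Dq q) = Algebra.adjoin ℂ {Dx q ^ ℓ, Dd q ^ ℓ}) :
    Dx q ^ ℓ ∈ Subalgebra.center ℂ (Dq q) :=
  hcenter ▸ Algebra.subset_adjoin (by simp)

theorem Dd_pow_mem_center
    (hcenter : Subalgebra.center ℂ (Dq q) = Algebra.adjoin ℂ {Dx q ^ ℓ, Dd q ^ ℓ}) :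
    Dd q ^ ℓ ∈ Subalgebra.center ℂ (Dq q) :=
  hcenter ▸ Algebra.subset_adjoin (by simp)

theorem span_pow_mul_pow_eq_top
    (hcenter : Subalgebra.center ℂ (Dq q) = Algebra.adjoin ℂ {Dx q ^ ℓ, Dd q ^ ℓ}) :
    span ℂ (range fun p : ℕ × ℕ ↦
      (⟨Dx q ^ ℓ, Dx_pow_mem_center hcenter⟩ : Subalgebra.center ℂ (Dq q)) ^ p.1
        * ⟨Dd q ^ ℓ, Dd_pow_mem_center hcenter⟩ ^ p.2) = ⊤ := by
  rw [← Algebra.toSubmodule_adjoin_pair, Algebra.toSubmodule_eq_top]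
  apply Subalgebra.map_injective (f := (Subalgebra.center ℂ (Dq q)).val) Subtype.val_injective
  rw [AlgHom.map_adjoin, Set.image_pair, Algebra.map_top, Subalgebra.range_val]
  exact hcenter.symm

theorem monomial_mul_add_mul_add
    (hcenter : Subalgebra.center ℂ (Dq q) = Algebra.adjoin ℂ {Dx q ^ ℓ, Dd q ^ ℓ})
    (a b m k : ℕ) :
    monomial q (a * ℓ + m, b * ℓ + k)
      = (Dx q ^ ℓ) ^ a * (Dd q ^ ℓ) ^ b * monomial q (m, k) := by
  have hcomm : Commute ((Dd q ^ ℓ) ^ b) (Dx q ^ m) :=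
    Subalgebra.mem_center_iff.mp (pow_mem (Dd_pow_mem_center hcenter) b) _ |>.symm
  simp only [monomial, pow_add, pow_mul', mul_assoc, hcomm.left_comm]

end Center

end Dq

theorem dq_free_over_center_general (q : ℂ) (ℓ : ℕ) (hℓ : 1 < ℓ)
    (hcenter : Subalgebra.center ℂ (Dq q) = Algebra.adjoin ℂ {(Dx q) ^ ℓ, (Dd q) ^ ℓ}) :
    ∃ b : Module.Basis (Fin ℓ × Fin ℓ) ↥(Subalgebra.center ℂ (Dq q)) (Dq q),
      ∀ mk : Fin ℓ × Fin ℓ, b mk = (Dx q) ^ (mk.1 : ℕ) * (Dd q) ^ (mk.2 : ℕ) := by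
  have : NeZero ℓ := ⟨by omega⟩
  let e := ((Nat.divModEquiv ℓ).prodCongr (Nat.divModEquiv ℓ)).trans
    (Equiv.prodProdProdComm ℕ (Fin ℓ) ℕ (Fin ℓ))
  refine ⟨.ofSMulTower (c := fun mk : Fin ℓ × Fin ℓ ↦ Dx q ^ (mk.1 : ℕ) * Dd q ^ (mk.2 : ℕ))
    (Dq.span_pow_mul_pow_eq_top hcenter) ((Dq.basisMonomial q).reindex e) fun p ↦ ?_,
    fun mk ↦ by rw [Module.Basis.coe_ofSMulTower]⟩
  rw [Module.Basis.reindex_apply, Dq.coe_basisMonomial]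
  exact Dq.monomial_mul_add_mul_add hcenter ..

/-- if `q` is a primitive ℓ-th root of unity with `ℓ > 1` odd, then
`D_q(ℂ)` is a free module of rank `ℓ²` over its center (the polynomial subalgebra
`ℂ[x^ℓ, ∂^ℓ]`), with basis the ordered monomials `xᵐ∂ᵏ`, `0 ≤ m, k ≤ ℓ−1`. -/
theorem dq_free_over_center (q : ℂ) (ℓ : ℕ) (hℓ : 1 < ℓ) (hodd : Odd ℓ)
    (hq : IsPrimitiveRoot q ℓ)
    (hcenter : Subalgebra.center ℂ (Dq q) = Algebra.adjoin ℂ {(Dx q) ^ ℓ, (Dd q) ^ ℓ}) :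
    ∃ b : Module.Basis (Fin ℓ × Fin ℓ) ↥(Subalgebra.center ℂ (Dq q)) (Dq q),
      ∀ mk : Fin ℓ × Fin ℓ, b mk = (Dx q) ^ (mk.1 : ℕ) * (Dd q) ^ (mk.2 : ℕ) :=
  dq_free_over_center_general q ℓ hℓ hcenter
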